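/- Let G be a nontrivial finite group and m > 1. The Cayley graph G_m(G) = Cay(G^m, S) is regular of degree binom(m+1, 2)·(|G| − 1), has |G|^m vertices, and every pair of adjacent vertices has exactly |G| + 2m − 4 common neighbours (i.e. G_m(G) is edge-regular with parameters (|G|^m, binom(m+1,2)(|G|−1), |G|+2m−4)). -/

import Mathlib

/-!
Right multiplication by `g` is an automorphism of the Cayley graph, so the degree is `|S|`, and the
common neighbours of `g` and `s g` correspond to the `t ∈ S` with `t s⁻¹ ∈ S`.

Extended by `1`, the generator `x_{[k,l)}` becomes a step function on `ℕ` whose jumps are exactly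
`k` and `l`; hence `S` is parametrised injectively by `x ≠ 1` and `1 ≤ k < l ≤ m + 1`, and
`|S| = (|G| - 1) C(m+1, 2)`. The jumps of a pointwise product contain the symmetric difference of
the jumps of the factors. So if `t = y_{[a,b)}` and `t s⁻¹` both lie in `S`, where `s = x_{[k,l)}`,
then `{a, b}` meets `{k, l}`, and evaluating at a few positions leaves exactly: `y_{[k,l)}` with
`y ∉ {1, x}`, `x_{[a,l)}` or `x_{[k,b)}` with one endpoint moved, and `x⁻¹_{[a,k)}`, `x⁻¹_{[l,b)}`.
These number `(|G| - 2) + (l - 2) + (m - k) + (k - 1) + (m + 1 - l) = |G| + 2m - 4`.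
-/

namespace CayleyStmt7

variable {G : Type*}

def intvl [Group G] (m : ℕ) (x : G) (k l : ℕ) : Fin m → G :=
  fun i => if k ≤ i.1 + 1 ∧ i.1 + 1 < l then x else 1

def cS (G : Type*) [Group G] (m : ℕ) : Set (Fin m → G) :=
  {v | ∃ (x : G) (k l : ℕ), x ≠ 1 ∧ 1 ≤ k ∧ k < l ∧ l ≤ m + 1 ∧ v = intvl m x k l}

def cAdj [Group G] (m : ℕ) (g h : Fin m → G) : Prop := h * g⁻¹ ∈ cS G m

open Finset Function

section Cayley

variable {H : Type*} [Group H]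

theorem ncard_setOf_mul_inv_mem (S : Set H) (g : H) : {h | h * g⁻¹ ∈ S}.ncard = S.ncard :=
  Set.ncard_preimage_of_injective_subset_range (mul_left_injective g⁻¹)
    fun s _ => ⟨s * g, mul_inv_cancel_right s g⟩

theorem ncard_setOf_mul_inv_mem_and_mul_inv_mem (S : Set H) (g h : H) :
    {v | v * g⁻¹ ∈ S ∧ v * h⁻¹ ∈ S}.ncard = {t | t ∈ S ∧ t * (h * g⁻¹)⁻¹ ∈ S}.ncard := by
  rw [← ncard_setOf_mul_inv_mem {t | t ∈ S ∧ t * (h * g⁻¹)⁻¹ ∈ S} g]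
  congr! 3 with v
  simp only [Set.mem_ofPred_eq, mul_inv_rev, inv_inv, mul_assoc, inv_mul_cancel_left]

end Cayley

section Block

variable [Group G]

def block (x : G) (k l : ℕ) : ℕ → G := fun j => if k ≤ j ∧ j < l then x else 1

-- `0 - 1 = 0`, so `0` is never a jump.
def jumps (f : ℕ → G) : Set ℕ := {j | f (j - 1) ≠ f j}

theorem jumps_inv (f : ℕ → G) : jumps f⁻¹ = jumps f := by
  ext j
  simp [jumps]

theorem symmDiff_jumps_subset_jumps_mul (f g : ℕ → G) :
    symmDiff (jumps f) (jumps g) ⊆ jumps (f * g) := by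
  rintro j (⟨hf, hg⟩ | ⟨hg, hf⟩) <;> simp_all [jumps]

theorem jumps_block {x : G} {k l : ℕ} (hx : x ≠ 1) (hk : 1 ≤ k) (hkl : k < l) :
    jumps (block x k l) = {k, l} := by
  ext j
  simp only [jumps, block, Set.mem_ofPred_eq, Set.mem_insert_iff, Set.mem_singleton_iff]
  split_ifs <;>
    simp only [ne_eq, hx, hx.symm, not_true_eq_false, not_false_eq_true, false_iff, true_iff,
      not_or] <;> omega

theorem block_ne_one {z : G} {c d : ℕ} (hz : z ≠ 1) (hcd : c < d) : block z c d ≠ 1 :=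
  fun h => hz (by simpa [block, hcd] using congrFun h c)

def blocks (G : Type*) [Group G] (n : ℕ) : Set (ℕ → G) :=
  {f | ∃ z c d, z ≠ 1 ∧ 1 ≤ c ∧ c < d ∧ d ≤ n ∧ f = block z c d}

def BlockAdj (x : G) (k l : ℕ) (y : G) (a b : ℕ) : Prop :=
  (a = k ∧ b = l ∧ y ≠ x) ∨ (y = x ∧ b = l ∧ a ≠ k) ∨ (y = x ∧ a = k ∧ b ≠ l) ∨
    (y = x⁻¹ ∧ b = k) ∨ (y = x⁻¹ ∧ a = l)

theorem blockAdj_of_mul_inv_eq_block {x y z : G} {k l a b c d : ℕ} (hx : x ≠ 1) (hy : y ≠ 1)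
    (hz : z ≠ 1) (hk : 1 ≤ k) (hkl : k < l) (ha : 1 ≤ a) (hab : a < b) (hc : 1 ≤ c)
    (hcd : c < d) (h : block y a b * (block x k l)⁻¹ = block z c d) : BlockAdj x k l y a b := by
  have hval (j : ℕ) : block y a b j * (block x k l j)⁻¹ = block z c d j := congrFun h j
  have hJ : symmDiff {a, b} {k, l} ⊆ ({c, d} : Set ℕ) := by
    rw [← jumps_block hy ha hab, ← jumps_block hx hk hkl, ← jumps_block hz hc hcd, ← h,
      ← jumps_inv (block x k l)]
    exact symmDiff_jumps_subset_jumps_mul _ _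
  simp only [Set.subset_def, Set.mem_symmDiff, Set.mem_insert_iff, Set.mem_singleton_iff] at hJ
  by_cases hak : a = k <;> by_cases hbl : b = l
  · subst hak hbl
    refine Or.inl ⟨rfl, rfl, fun hyx => block_ne_one hz hcd ?_⟩
    rw [← h, hyx, mul_inv_cancel]
  · have := hval a
    have h1 := hJ b (by omega)
    have h2 := hJ l (by omega)
    simp (disch := omega) only [block, if_pos, if_neg, mul_eq_one_iff_eq_inv, inv_inv] at this
    exact Or.inr (Or.inr (Or.inl ⟨this, hak, hbl⟩))
  · have := hval (b - 1)
    have h1 := hJ a (by omega)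
    have h2 := hJ k (by omega)
    simp (disch := omega) only [block, if_pos, if_neg, mul_eq_one_iff_eq_inv, inv_inv] at this
    exact Or.inr (Or.inl ⟨this, hbl, hak⟩)
  by_cases hbk : b = k
  · have h1 := hJ a (by omega)
    have h2 := hJ l (by omega)
    have ha' := hval a
    have hk' := hval k
    simp (disch := omega) only [block, if_pos, if_neg, inv_one, mul_one, one_mul] at ha' hk'
    exact Or.inr (Or.inr (Or.inr (Or.inl ⟨ha'.trans hk'.symm, hbk⟩)))
  by_cases hal : a = l
  · have h1 := hJ b (by omega)
    have h2 := hJ k (by omega)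
    have hl' := hval l
    have hk' := hval k
    simp (disch := omega) only [block, if_pos, if_neg, inv_one, mul_one, one_mul] at hl' hk'
    exact Or.inr (Or.inr (Or.inr (Or.inr ⟨hl'.trans hk'.symm, hal⟩)))
  -- now `{a, b}` and `{k, l}` are disjoint, and all four points would be jumps of `block z c d`
  have := hJ a (by omega)
  have := hJ b (by omega)
  have := hJ k (by omega)
  have := hJ l (by omega)
  omega

theorem mul_inv_mem_blocks_of_blockAdj {x y : G} {k l a b n : ℕ} (hx : x ≠ 1) (hy : y ≠ 1)
    (hk : 1 ≤ k) (hkl : k < l) (hl : l ≤ n) (ha : 1 ≤ a) (hab : a < b) (hb : b ≤ n)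
    (h : BlockAdj x k l y a b) : block y a b * (block x k l)⁻¹ ∈ blocks G n := by
  rcases h with ⟨rfl, rfl, hyx⟩ | ⟨rfl, rfl, hak⟩ | ⟨rfl, rfl, hbl⟩ | ⟨rfl, rfl⟩ | ⟨rfl, rfl⟩
  · refine ⟨y * x⁻¹, a, b, mt mul_inv_eq_one.1 hyx, ha, hab, hb, ?_⟩
    funext j; simp only [block, Pi.mul_apply, Pi.inv_apply]; split_ifs <;> first | omega | simp
  · rcases lt_or_gt_of_ne hak with h | h
    · refine ⟨y, a, k, hy, ha, h, by omega, ?_⟩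
      funext j; simp only [block, Pi.mul_apply, Pi.inv_apply]; split_ifs <;> first | omega | simp
    · refine ⟨y⁻¹, k, a, inv_ne_one.2 hy, hk, h, by omega, ?_⟩
      funext j; simp only [block, Pi.mul_apply, Pi.inv_apply]; split_ifs <;> first | omega | simp
  · rcases lt_or_gt_of_ne hbl with h | h
    · refine ⟨y⁻¹, b, l, inv_ne_one.2 hy, by omega, h, hl, ?_⟩
      funext j; simp only [block, Pi.mul_apply, Pi.inv_apply]; split_ifs <;> first | omega | simp
    · refine ⟨y, l, b, hy, by omega, h, hb, ?_⟩
      funext j; simp only [block, Pi.mul_apply, Pi.inv_apply]; split_ifs <;> first | omega | simp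
  · refine ⟨x⁻¹, a, l, inv_ne_one.2 hx, ha, by omega, hl, ?_⟩
    funext j; simp only [block, Pi.mul_apply, Pi.inv_apply]; split_ifs <;> first | omega | simp
  · refine ⟨x⁻¹, k, b, inv_ne_one.2 hx, hk, by omega, hb, ?_⟩
    funext j; simp only [block, Pi.mul_apply, Pi.inv_apply]; split_ifs <;> first | omega | simp

theorem block_mul_inv_mem_blocks_iff {x y : G} {k l a b n : ℕ} (hx : x ≠ 1) (hy : y ≠ 1)
    (hk : 1 ≤ k) (hkl : k < l) (hl : l ≤ n) (ha : 1 ≤ a) (hab : a < b) (hb : b ≤ n) :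
    block y a b * (block x k l)⁻¹ ∈ blocks G n ↔ BlockAdj x k l y a b := by
  refine ⟨?_, mul_inv_mem_blocks_of_blockAdj hx hy hk hkl hl ha hab hb⟩
  rintro ⟨z, c, d, hz, hc, hcd, -, h⟩
  exact blockAdj_of_mul_inv_eq_block hx hy hz hk hkl ha hab hc hcd h

end Block

section Counting

variable [Group G] [Fintype G] [DecidableEq G]

def blockParams (G : Type*) [Group G] [Fintype G] [DecidableEq G] (n : ℕ) :
    Finset (G × ℕ × ℕ) :=
  univ.erase 1 ×ˢ {p ∈ Icc 1 n ×ˢ Icc 1 n | p.1 < p.2}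

theorem mem_blockParams {n : ℕ} {p : G × ℕ × ℕ} :
    p ∈ blockParams G n ↔ p.1 ≠ 1 ∧ 1 ≤ p.2.1 ∧ p.2.1 < p.2.2 ∧ p.2.2 ≤ n := by
  simp only [blockParams, mem_product, mem_erase, mem_univ, and_true, mem_filter, mem_Icc]
  exact and_congr_right fun _ => by omega

theorem blocks_eq_image (n : ℕ) :
    blocks G n = (fun p : G × ℕ × ℕ => block p.1 p.2.1 p.2.2) '' blockParams G n := by
  ext f
  simp only [blocks, Set.mem_image, Finset.mem_coe, mem_blockParams, Prod.exists]
  constructor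
  · rintro ⟨z, c, d, hz, hc, hcd, hd, rfl⟩
    exact ⟨z, c, d, ⟨hz, hc, hcd, hd⟩, rfl⟩
  · rintro ⟨z, c, d, ⟨hz, hc, hcd, hd⟩, rfl⟩
    exact ⟨z, c, d, hz, hc, hcd, hd, rfl⟩

theorem injOn_block (n : ℕ) :
    Set.InjOn (fun p : G × ℕ × ℕ => block p.1 p.2.1 p.2.2) (blockParams G n) := by
  rintro ⟨x, k, l⟩ hp ⟨y, a, b⟩ hq h
  simp only [Finset.mem_coe, mem_blockParams] at hp hq h
  have hJ := jumps_block hp.1 hp.2.1 hp.2.2.1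
  rw [h, jumps_block hq.1 hq.2.1 hq.2.2.1, Set.pair_eq_pair_iff] at hJ
  obtain ⟨rfl, rfl⟩ : k = a ∧ l = b := by omega
  simpa [block, hp.2.2.1] using congrFun h k

def commonParams (x : G) (k l n : ℕ) : Finset (G × ℕ × ℕ) :=
  ((univ \ {1, x}).image fun y => (y, k, l)) ∪
    (((Ico 1 l).erase k).image fun a => (x, a, l)) ∪
    (((Ioc k n).erase l).image fun b => (x, k, b)) ∪
    ((Ico 1 k).image fun a => (x⁻¹, a, k)) ∪
    ((Ioc l n).image fun b => (x⁻¹, l, b))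

theorem mem_commonParams {x : G} {k l n : ℕ} (hx : x ≠ 1) (hk : 1 ≤ k) (hkl : k < l)
    (hl : l ≤ n) {p : G × ℕ × ℕ} :
    p ∈ commonParams x k l n ↔
      p ∈ blockParams G n ∧ block p.1 p.2.1 p.2.2 * (block x k l)⁻¹ ∈ blocks G n := by
  obtain ⟨y, a, b⟩ := p
  have hx' : x⁻¹ ≠ 1 := inv_ne_one.2 hx
  calc (y, a, b) ∈ commonParams x k l n ↔
      (y ≠ 1 ∧ 1 ≤ a ∧ a < b ∧ b ≤ n) ∧ BlockAdj x k l y a b := by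
        simp only [commonParams, BlockAdj, mem_union, mem_image, mem_sdiff, mem_univ, mem_insert,
          mem_singleton, mem_erase, mem_Ico, mem_Ioc, Prod.mk.injEq, existsAndEq]
        grind
    _ ↔ _ := by
      rw [mem_blockParams]
      exact and_congr_right fun hp =>
        (block_mul_inv_mem_blocks_iff hx hp.1 hk hkl hl hp.2.1 hp.2.2.1 hp.2.2.2).symm

theorem card_commonParams {x : G} {k l n : ℕ} (hx : x ≠ 1) (hk : 1 ≤ k) (hkl : k < l)
    (hl : l ≤ n) : #(commonParams x k l n) = Fintype.card G + 2 * n - 6 := by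
  have hG : #({1, x} : Finset G) = 2 := card_pair hx.symm
  have hG' : 2 ≤ Fintype.card G := hG ▸ card_le_univ _
  rw [commonParams, card_union_of_disjoint, card_union_of_disjoint, card_union_of_disjoint,
    card_union_of_disjoint, card_image_of_injective, card_image_of_injective,
    card_image_of_injective, card_image_of_injective, card_image_of_injective,
    card_sdiff_of_subset (subset_univ _), card_univ, hG, card_erase_of_mem (mem_Ico.2 ⟨hk, hkl⟩),
    card_erase_of_mem (mem_Ioc.2 ⟨hkl, hl⟩), Nat.card_Ico, Nat.card_Ico, Nat.card_Ioc, Nat.card_Ioc]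
  · omega
  all_goals first
    | intro u v h; simpa using h
    | rw [disjoint_left]
      rintro ⟨y, a, b⟩ h h'
      simp only [mem_union, mem_image, mem_sdiff, mem_univ, mem_insert, mem_singleton, mem_erase,
        mem_Ico, mem_Ioc, Prod.mk.injEq, existsAndEq] at h h'
      omega

theorem blocks_mul_inv_eq_image {x : G} {k l n : ℕ} (hx : x ≠ 1) (hk : 1 ≤ k) (hkl : k < l)
    (hl : l ≤ n) :
    {f | f ∈ blocks G n ∧ f * (block x k l)⁻¹ ∈ blocks G n} =
      (fun p : G × ℕ × ℕ => block p.1 p.2.1 p.2.2) '' commonParams x k l n := by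
  ext f
  constructor
  · rintro ⟨hf, hfx⟩
    rw [blocks_eq_image] at hf
    obtain ⟨p, hp, rfl⟩ := hf
    exact ⟨p, (mem_commonParams hx hk hkl hl).2 ⟨hp, hfx⟩, rfl⟩
  · rintro ⟨p, hp, rfl⟩
    obtain ⟨hp, hpx⟩ := (mem_commonParams hx hk hkl hl).1 hp
    exact ⟨blocks_eq_image (G := G) n ▸ ⟨p, hp, rfl⟩, hpx⟩

end Counting

section

variable [Group G] [Fintype G]

theorem ncard_blocks (n : ℕ) : (blocks G n).ncard = (Fintype.card G - 1) * n.choose 2 := by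
  classical
  rw [blocks_eq_image, (injOn_block n).ncard_image, Set.ncard_coe_finset, blockParams,
    card_product, card_erase_of_mem (mem_univ _), card_univ, card_product_filter_lt,
    Nat.card_Icc, Nat.add_sub_cancel]

theorem ncard_blocks_mul_inv {x : G} {k l n : ℕ} (hx : x ≠ 1) (hk : 1 ≤ k) (hkl : k < l)
    (hl : l ≤ n) :
    {f | f ∈ blocks G n ∧ f * (block x k l)⁻¹ ∈ blocks G n}.ncard =
      Fintype.card G + 2 * n - 6 := by
  classical
  have hsub : (commonParams x k l n : Set (G × ℕ × ℕ)) ⊆ blockParams G n :=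
    fun p hp => ((mem_commonParams hx hk hkl hl).1 hp).1
  rw [blocks_mul_inv_eq_image hx hk hkl hl, ((injOn_block n).mono hsub).ncard_image,
    Set.ncard_coe_finset, card_commonParams hx hk hkl hl]

end

section Transfer

variable [Group G]

noncomputable def toSeq (m : ℕ) : (Fin m → G) →* (ℕ → G) :=
  ExtendByOne.hom G fun i : Fin m => i.1 + 1

theorem injective_succ_val (m : ℕ) : Injective fun i : Fin m => i.1 + 1 :=
  fun _ _ h => Fin.ext (Nat.succ_injective h)

theorem toSeq_injective (m : ℕ) : Injective (toSeq (G := G) m) := fun v w h => funext fun i => by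
  simpa [toSeq, (injective_succ_val m).extend_apply] using congrFun h (i.1 + 1)

theorem toSeq_intvl {m k l : ℕ} (x : G) (hk : 1 ≤ k) (hl : l ≤ m + 1) :
    toSeq m (intvl m x k l) = block x k l := by
  funext j
  by_cases hj : ∃ i : Fin m, i.1 + 1 = j
  · obtain ⟨i, rfl⟩ := hj
    simp [toSeq, (injective_succ_val m).extend_apply, intvl, block]
  · rw [toSeq, ExtendByOne.hom_apply, extend_apply' _ _ _ hj, block, if_neg]
    · rfl
    · exact fun hkj => hj ⟨⟨j - 1, by omega⟩, Nat.sub_add_cancel (by omega)⟩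

theorem mem_cS_iff {m : ℕ} {v : Fin m → G} : v ∈ cS G m ↔ toSeq m v ∈ blocks G (m + 1) := by
  constructor
  · rintro ⟨x, k, l, hx, hk, hkl, hl, rfl⟩
    exact ⟨x, k, l, hx, hk, hkl, hl, toSeq_intvl x hk hl⟩
  · rintro ⟨x, k, l, hx, hk, hkl, hl, h⟩
    exact ⟨x, k, l, hx, hk, hkl, hl, toSeq_injective m (h.trans (toSeq_intvl x hk hl).symm)⟩

theorem blocks_subset_range_toSeq (m : ℕ) : blocks G (m + 1) ⊆ Set.range (toSeq m) := by
  rintro _ ⟨x, k, l, -, hk, -, hl, rfl⟩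
  exact ⟨intvl m x k l, toSeq_intvl x hk hl⟩

variable [Fintype G]

theorem ncard_cS (m : ℕ) : (cS G m).ncard = (Fintype.card G - 1) * (m + 1).choose 2 := by
  rw [show cS G m = toSeq m ⁻¹' blocks G (m + 1) from Set.ext fun _ => mem_cS_iff,
    Set.ncard_preimage_of_injective_subset_range (toSeq_injective m)
      (blocks_subset_range_toSeq m), ncard_blocks]

theorem ncard_cS_mul_inv {m k l : ℕ} {x : G} (hx : x ≠ 1) (hk : 1 ≤ k) (hkl : k < l)
    (hl : l ≤ m + 1) :
    {t | t ∈ cS G m ∧ t * (intvl m x k l)⁻¹ ∈ cS G m}.ncard = Fintype.card G + 2 * m - 4 := by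
  have hpre : {t | t ∈ cS G m ∧ t * (intvl m x k l)⁻¹ ∈ cS G m} =
      toSeq m ⁻¹' {f | f ∈ blocks G (m + 1) ∧ f * (block x k l)⁻¹ ∈ blocks G (m + 1)} := by
    ext t
    simp only [Set.mem_ofPred_eq, Set.mem_preimage, mem_cS_iff, map_mul, map_inv,
      toSeq_intvl x hk hl]
  rw [hpre, Set.ncard_preimage_of_injective_subset_range (toSeq_injective m)
      fun f hf => blocks_subset_range_toSeq m hf.1, ncard_blocks_mul_inv hx hk hkl hl]
  omega

end Transfer

theorem edge_regular [Group G] [Fintype G] (m : ℕ) :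
    Fintype.card (Fin m → G) = Fintype.card G ^ m ∧
    (∀ g : Fin m → G, {h : Fin m → G | cAdj m g h}.ncard =
      Nat.choose (m + 1) 2 * (Fintype.card G - 1)) ∧
    (∀ g h : Fin m → G, cAdj m g h →
      {v : Fin m → G | cAdj m g v ∧ cAdj m h v}.ncard =
        Fintype.card G + 2 * m - 4) := by
  refine ⟨by simp, fun g => ?_, fun g h hgh => ?_⟩
  · rw [mul_comm, ← ncard_cS]
    exact ncard_setOf_mul_inv_mem (cS G m) g
  · obtain ⟨x, k, l, hx, hk, hkl, hl, hs⟩ := hgh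
    rw [← ncard_cS_mul_inv hx hk hkl hl, ← hs]
    exact ncard_setOf_mul_inv_mem_and_mul_inv_mem (cS G m) g h

end CayleyStmt7
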